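/- arXiv:2107.02313 — 3 statements merged into one kernel-verified Lean document; each statement's English description precedes it below -/
import Mathlib

section
/- For the map g_{q,A} on the 3-sphere defined in Hopf coordinates by g_{q,A}(θ₁, θ₂, ξ) = (θ₁ + A r₁^{q(q+1)} r₂^{q²} cos(2π q²[θ₁(1+q⁻¹) − θ₂]), θ₂ + (1+q⁻¹) A r₁^{q(q+1)} r₂^{q²} cos(2π q²[θ₁(1+q⁻¹) − θ₂]), ξ) with r₁ = sin ξ, r₂ = cos ξ, the Jacobian determinant of g_{q,A} (with respect to the coordinates (θ₁, θ₂, ξ)) equals 1. -/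
open Real

/-- The map `g_{q,A}` in Hopf coordinates `(θ₁, θ₂, ξ)`, lifted to `ℝ³`. -/
noncomputable def gHopf (q : ℕ) (A : ℝ) : ℝ × ℝ × ℝ → ℝ × ℝ × ℝ := fun p =>
  (p.1 + A * (Real.sin p.2.2) ^ (q * (q + 1)) * (Real.cos p.2.2) ^ (q ^ 2) *
      Real.cos (2 * π * (q : ℝ) ^ 2 * (p.1 * (1 + (q : ℝ)⁻¹) - p.2.1)),
   p.2.1 + (1 + (q : ℝ)⁻¹) * A * (Real.sin p.2.2) ^ (q * (q + 1)) * (Real.cos p.2.2) ^ (q ^ 2) *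
      Real.cos (2 * π * (q : ℝ) ^ 2 * (p.1 * (1 + (q : ℝ)⁻¹) - p.2.1)),
   p.2.2)

/-- The obvious linear equivalence `ℝ × ℝ × ℝ ≃ₗ[ℝ] (Fin 3 → ℝ)`. -/
noncomputable def e3 : (ℝ × ℝ × ℝ) ≃ₗ[ℝ] (Fin 3 → ℝ) where
  toFun p := ![p.1, p.2.1, p.2.2]
  map_add' p q := by funext i; fin_cases i <;> simp
  map_smul' r p := by funext i; fin_cases i <;> simp
  invFun f := (f 0, f 1, f 2)
  left_inv p := by simp
  right_inv f := by funext i; fin_cases i <;> simp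

lemma det_one_add (c : ℝ) (L : (ℝ × ℝ × ℝ) →L[ℝ] ℝ)
    (h : L (1, 0, 0) + c * L (0, 1, 0) = 0) :
    LinearMap.det
      (((ContinuousLinearMap.fst ℝ ℝ (ℝ × ℝ) + L).prod
        (((ContinuousLinearMap.fst ℝ ℝ ℝ).comp (ContinuousLinearMap.snd ℝ ℝ (ℝ × ℝ)) + c • L).prod
          ((ContinuousLinearMap.snd ℝ ℝ ℝ).comp (ContinuousLinearMap.snd ℝ ℝ (ℝ × ℝ))))) :
        (ℝ × ℝ × ℝ) →L[ℝ] (ℝ × ℝ × ℝ)).toLinearMap = 1 := by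
  set B : Module.Basis (Fin 3) ℝ (ℝ × ℝ × ℝ) := Module.Basis.ofEquivFun e3 with hB
  have hB0 : B 0 = ((1 : ℝ), (0 : ℝ), (0 : ℝ)) := by
    simp [hB, Module.Basis.coe_ofEquivFun, e3]
  have hB1 : B 1 = ((0 : ℝ), (1 : ℝ), (0 : ℝ)) := by
    simp [hB, Module.Basis.coe_ofEquivFun, e3]
  have hB2 : B 2 = ((0 : ℝ), (0 : ℝ), (1 : ℝ)) := by
    simp [hB, Module.Basis.coe_ofEquivFun, e3]
  rw [← LinearMap.det_toMatrix B]
  have hM : LinearMap.toMatrix B B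
      (((ContinuousLinearMap.fst ℝ ℝ (ℝ × ℝ) + L).prod
        (((ContinuousLinearMap.fst ℝ ℝ ℝ).comp (ContinuousLinearMap.snd ℝ ℝ (ℝ × ℝ)) + c • L).prod
          ((ContinuousLinearMap.snd ℝ ℝ ℝ).comp (ContinuousLinearMap.snd ℝ ℝ (ℝ × ℝ))))) :
        (ℝ × ℝ × ℝ) →L[ℝ] (ℝ × ℝ × ℝ)).toLinearMap =
      !![1 + L (1, 0, 0), L (0, 1, 0), L (0, 0, 1);
         c * L (1, 0, 0), 1 + c * L (0, 1, 0), c * L (0, 0, 1);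
         0, 0, 1] := by
    ext i j
    fin_cases i <;> fin_cases j <;>
      simp [LinearMap.toMatrix_apply, hB0, hB1, hB2, hB, Module.Basis.ofEquivFun_repr_apply, e3,
        ContinuousLinearMap.prod_apply]
  rw [hM, Matrix.det_fin_three]
  norm_num
  simp only [Matrix.cons_val_zero, Matrix.cons_val_one, Matrix.cons_val_two, Matrix.head_cons, Matrix.tail_cons, Matrix.cons_val, Matrix.vecHead]
  linear_combination h

/-- The Jacobian determinant of `g_{q,A}` with respect to the
coordinates `(θ₁, θ₂, ξ)` equals `1`. -/
theorem jacobian_det_gHopf_eq_one (q : ℕ) (hq : 16 ≤ q) (A : ℝ) (hA : 0 < A)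
    (x : ℝ × ℝ × ℝ) :
    LinearMap.det ((fderiv ℝ (gHopf q A) x) : (ℝ × ℝ × ℝ) →ₗ[ℝ] (ℝ × ℝ × ℝ)) = 1 := by
  set c : ℝ := 1 + (q : ℝ)⁻¹ with hc
  set k : ℝ := 2 * π * (q : ℝ) ^ 2 with hk
  set φ : ℝ × ℝ × ℝ → ℝ := fun p =>
    A * Real.sin p.2.2 ^ (q * (q + 1)) * Real.cos p.2.2 ^ (q ^ 2) *
      Real.cos (k * (p.1 * c - p.2.1)) with hφdef
  have hφdiff : DifferentiableAt ℝ φ x := by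
    rw [hφdef]; fun_prop
  have hφ' : HasFDerivAt φ (fderiv ℝ φ x) x := hφdiff.hasFDerivAt
  set L : (ℝ × ℝ × ℝ) →L[ℝ] ℝ := fderiv ℝ φ x with hL
  -- rewrite gHopf in terms of φ
  have hg : gHopf q A = fun p => (p.1 + φ p, p.2.1 + c * φ p, p.2.2) := by
    funext p
    simp only [gHopf, hφdef, hc, hk]
    refine Prod.ext rfl (Prod.ext ?_ rfl)
    ring
  -- the derivative of gHopf
  have hE : HasFDerivAt (fun p : ℝ × ℝ × ℝ => (p.1 + φ p, p.2.1 + c * φ p, p.2.2))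
      (((ContinuousLinearMap.fst ℝ ℝ (ℝ × ℝ) + L).prod
        (((ContinuousLinearMap.fst ℝ ℝ ℝ).comp (ContinuousLinearMap.snd ℝ ℝ (ℝ × ℝ)) + c • L).prod
          ((ContinuousLinearMap.snd ℝ ℝ ℝ).comp (ContinuousLinearMap.snd ℝ ℝ (ℝ × ℝ)))))) x := by
    exact ((hasFDerivAt_fst).add hφ').prodMk
      (((hasFDerivAt_snd.fst).add (hφ'.const_mul c)).prodMk hasFDerivAt_snd.snd)
  -- key relation between the partial derivatives
  have key : L (1, 0, 0) + c * L (0, 1, 0) = 0 := by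
    set K : ℝ := A * Real.sin x.2.2 ^ (q * (q + 1)) * Real.cos x.2.2 ^ (q ^ 2) with hK
    -- partial derivative in θ₁
    have hline1 : HasDerivAt (fun t : ℝ => ((x.1 + t, x.2.1, x.2.2) : ℝ × ℝ × ℝ))
        ((1 : ℝ), (0 : ℝ), (0 : ℝ)) 0 :=
      ((hasDerivAt_id 0).const_add x.1).prodMk
        ((hasDerivAt_const 0 x.2.1).prodMk (hasDerivAt_const 0 x.2.2))
    have hx1 : ((x.1 + (0 : ℝ), x.2.1, x.2.2) : ℝ × ℝ × ℝ) = x := by simp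
    have hcomp1 : HasDerivAt (fun t : ℝ => φ (x.1 + t, x.2.1, x.2.2)) (L (1, 0, 0)) 0 :=
      by have h := (show HasFDerivAt φ L ((x.1 + (0 : ℝ), x.2.1, x.2.2)) by rw [hx1]; exact hφ').comp_hasDerivAt 0 hline1; exact h
    have hf1 : HasDerivAt (fun t : ℝ => φ (x.1 + t, x.2.1, x.2.2))
        (K * (-Real.sin (k * ((x.1 + 0) * c - x.2.1)) * (k * (1 * c)))) 0 := by
      have hinner : HasDerivAt (fun t : ℝ => k * ((x.1 + t) * c - x.2.1)) (k * (1 * c)) 0 :=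
        ((((hasDerivAt_id 0).const_add x.1).mul_const c).sub_const x.2.1).const_mul k
      simpa [hφdef, hK, mul_assoc] using (hinner.cos).const_mul K
    have e1 : L (1, 0, 0) = K * (-Real.sin (k * ((x.1 + 0) * c - x.2.1)) * (k * (1 * c))) :=
      hcomp1.unique hf1
    -- partial derivative in θ₂
    have hline2 : HasDerivAt (fun t : ℝ => ((x.1, x.2.1 + t, x.2.2) : ℝ × ℝ × ℝ))
        ((0 : ℝ), (1 : ℝ), (0 : ℝ)) 0 :=
      (hasDerivAt_const (0 : ℝ) x.1).prodMk
        (((hasDerivAt_id 0).const_add x.2.1).prodMk (hasDerivAt_const 0 x.2.2))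
    have hx2 : ((x.1, x.2.1 + (0 : ℝ), x.2.2) : ℝ × ℝ × ℝ) = x := by simp
    have hcomp2 : HasDerivAt (fun t : ℝ => φ (x.1, x.2.1 + t, x.2.2)) (L (0, 1, 0)) 0 :=
      by have h := (show HasFDerivAt φ L ((x.1, x.2.1 + (0 : ℝ), x.2.2)) by rw [hx2]; exact hφ').comp_hasDerivAt 0 hline2; exact h
    have hf2 : HasDerivAt (fun t : ℝ => φ (x.1, x.2.1 + t, x.2.2))
        (K * (-Real.sin (k * (x.1 * c - (x.2.1 + 0))) * (k * (-1)))) 0 := by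
      have hinner : HasDerivAt (fun t : ℝ => k * (x.1 * c - (x.2.1 + t))) (k * (-1)) 0 := by
        simpa using (((hasDerivAt_id 0).const_add x.2.1).const_sub (x.1 * c)).const_mul k
      simpa [hφdef, hK, mul_assoc] using (hinner.cos).const_mul K
    have e2 : L (0, 1, 0) = K * (-Real.sin (k * (x.1 * c - (x.2.1 + 0))) * (k * (-1))) :=
      hcomp2.unique hf2
    simp only [add_zero] at e1 e2
    rw [e1, e2]; ring
  rw [hg, hE.fderiv]
  exact det_one_add c L key
end

section
/- Let f ∈ C²(ℝ) be monotonic on a compact interval I ⊂ ℝ, let J = [inf_I f, sup_I f], and suppose λ(J) ≥ k and sup_I |f''| · λ(I) ≤ ε · inf_I |f'|. Then f is (ε, k)-uniformly stretching on I: for every subinterval J̃ ⊂ J, |λ(I ∩ f⁻¹(J̃))/λ(I) − λ(J̃)/λ(J)| ≤ ε · λ(J̃)/λ(J). -/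
open Real MeasureTheory

lemma aux_mono_stretch (f : ℝ → ℝ) (hf : ContDiff ℝ 2 f)
    (a b : ℝ) (hab : a < b)
    (hmono : MonotoneOn f (Set.Icc a b))
    (ε k : ℝ) (hε : 0 < ε) (hk : 0 < k)
    (hJ : k ≤ sSup (f '' Set.Icc a b) - sInf (f '' Set.Icc a b))
    (hstretch : sSup ((fun x => |deriv (deriv f) x|) '' Set.Icc a b) * (b - a) ≤
      ε * sInf ((fun x => |deriv f x|) '' Set.Icc a b)) :
    ∀ c d : ℝ, c ≤ d →
      Set.Icc c d ⊆ Set.Icc (sInf (f '' Set.Icc a b)) (sSup (f '' Set.Icc a b)) →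
      |(volume (Set.Icc a b ∩ f ⁻¹' Set.Icc c d)).toReal / (b - a) -
          (d - c) / (sSup (f '' Set.Icc a b) - sInf (f '' Set.Icc a b))| ≤
        ε * ((d - c) / (sSup (f '' Set.Icc a b) - sInf (f '' Set.Icc a b))) := by
  intro c d hcd hsub
  set S := Set.Icc a b with hS
  have hab' : a ≤ b := hab.le
  have haS : a ∈ S := Set.left_mem_Icc.mpr hab'
  have hbS : b ∈ S := Set.right_mem_Icc.mpr hab'
  have hSne : S.Nonempty := ⟨a, haS⟩
  -- differentiability facts
  have hdf : Differentiable ℝ f := hf.differentiable (by norm_num)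
  have hcf : Continuous f := hdf.continuous
  have hf2 : ContDiff ℝ 1 (deriv f) := by
    have : ContDiff ℝ ((1 : ℕ) + 1) f := by exact_mod_cast hf
    exact (contDiff_succ_iff_deriv.mp this).2.2
  have hdf' : Differentiable ℝ (deriv f) := hf2.differentiable (by norm_num)
  have hcf' : Continuous (deriv f) := hdf'.continuous
  -- sInf and sSup of image
  have hIm : IsLeast (f '' S) (f a) :=
    ⟨⟨a, haS, rfl⟩, by rintro y ⟨x, hx, rfl⟩; exact hmono haS hx hx.1⟩
  have hIM : IsGreatest (f '' S) (f b) :=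
    ⟨⟨b, hbS, rfl⟩, by rintro y ⟨x, hx, rfl⟩; exact hmono hx hbS hx.2⟩
  have hm : sInf (f '' S) = f a := hIm.csInf_eq
  have hM : sSup (f '' S) = f b := hIM.csSup_eq
  rw [hm, hM] at hJ hsub ⊢
  have hD : 0 < f b - f a := lt_of_lt_of_le hk hJ
  have hL : (0:ℝ) < b - a := by linarith
  -- bounds A and B
  set A := sSup ((fun x => |deriv (deriv f) x|) '' S) with hA
  set B := sInf ((fun x => |deriv f x|) '' S) with hB
  have hcf'' : Continuous (deriv (deriv f)) := hf2.continuous_deriv le_rfl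
  have hAbdd : BddAbove ((fun x => |deriv (deriv f) x|) '' S) :=
    ((isCompact_Icc).image hcf''.abs).bddAbove
  have hAx : ∀ x ∈ S, |deriv (deriv f) x| ≤ A := fun x hx =>
    le_csSup hAbdd ⟨x, hx, rfl⟩
  have hBx : ∀ x ∈ S, B ≤ |deriv f x| := fun x hx =>
    csInf_le ⟨0, by rintro y ⟨z, hz, rfl⟩; exact abs_nonneg _⟩ ⟨x, hx, rfl⟩
  have hB0 : 0 ≤ B := le_csInf (hSne.image _) (by rintro y ⟨z, hz, rfl⟩; exact abs_nonneg _)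
  -- B > 0
  have hBpos : 0 < B := by
    rcases hB0.lt_or_eq with h | h
    · exact h
    · exfalso
      have hB00 : B = 0 := h.symm
      have hA0 : A ≤ 0 := by nlinarith [hstretch]
      have hf''0 : ∀ x ∈ S, deriv (deriv f) x = 0 := by
        intro x hx
        have := hAx x hx
        have : |deriv (deriv f) x| ≤ 0 := le_trans this hA0
        exact abs_eq_zero.mp (le_antisymm this (abs_nonneg _))
      -- deriv f is constant on S
      have hconst : ∀ x ∈ S, deriv f x = deriv f a := by
        intro x hx
        rcases eq_or_lt_of_le hx.1 with h' | h'
        · rw [← h']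
        · obtain ⟨ζ, hζ, hslope⟩ := exists_deriv_eq_slope (deriv f) h'
            (hcf'.continuousOn) (hdf'.differentiableOn)
          have hζS : ζ ∈ S := ⟨hζ.1.le, hζ.2.le.trans hx.2⟩
          have := hf''0 ζ hζS
          rw [this] at hslope
          have := (div_eq_zero_iff.mp hslope.symm).resolve_right (by linarith [hζ.1, hζ.2])
          linarith
      have hfa0 : deriv f a = 0 := by
        have h1 : B ≤ |deriv f a| := hBx a haS
        have h2 : |deriv f a| ≤ B := by
          apply le_csInf (hSne.image _)
          rintro y ⟨z, hz, rfl⟩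
          show |deriv f a| ≤ |deriv f z|
          rw [hconst z hz]
        rw [← h] at *
        exact abs_eq_zero.mp (le_antisymm (h2.trans h.le) (abs_nonneg _))
      -- f constant on S
      have : f b = f a := by
        obtain ⟨ζ, hζ, hslope⟩ := exists_deriv_eq_slope f hab
          (hcf.continuousOn) (hdf.differentiableOn)
        have hζS : ζ ∈ S := ⟨hζ.1.le, hζ.2.le⟩
        rw [hconst ζ hζS, hfa0] at hslope
        have := (div_eq_zero_iff.mp hslope.symm).resolve_right (by linarith)
        linarith
      linarith
  -- deriv f positive on interior
  have hpos : ∀ x ∈ Set.Ioo a b, 0 < deriv f x := by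
    intro x hx
    by_contra hneg
    push_neg at hneg
    have hxS : x ∈ S := ⟨hx.1.le, hx.2.le⟩
    have hxB : deriv f x ≤ -B := by
      have := hBx x hxS
      rcases abs_cases (deriv f x) with ⟨h1, h2⟩ | ⟨h1, h2⟩ <;> linarith
    -- MVT gives a point with positive derivative
    obtain ⟨η₀, hη₀, hslope₀⟩ := exists_deriv_eq_slope f hab
      (hcf.continuousOn) (hdf.differentiableOn)
    have hη₀pos : 0 < deriv f η₀ := by rw [hslope₀]; positivity
    -- IVT: deriv f hits 0 between x and η₀
    have : (0:ℝ) ∈ Set.uIcc (deriv f x) (deriv f η₀) := by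
      rw [Set.mem_uIcc]; left; constructor <;> linarith
    obtain ⟨z, hz, hz0⟩ := intermediate_value_uIcc (hcf'.continuousOn) this
    have hzS : z ∈ S := by
      have h1 : Set.uIcc x η₀ ⊆ S := by
        apply Set.uIcc_subset_Icc hxS ⟨hη₀.1.le, hη₀.2.le⟩
      exact h1 hz
    have := hBx z hzS
    rw [hz0] at this
    simp at this
    linarith
  have hsm : StrictMonoOn f S :=
    strictMonoOn_of_deriv_pos (convex_Icc a b) hcf.continuousOn
      (by rwa [interior_Icc])
  -- find c' d' with f c' = c, f d' = d
  have hIVT : Set.Icc (f a) (f b) ⊆ f '' S := intermediate_value_Icc hab' hcf.continuousOn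
  obtain ⟨c', hc'S, hc'⟩ := hIVT (hsub ⟨le_refl c, hcd⟩)
  obtain ⟨d', hd'S, hd'⟩ := hIVT (hsub ⟨hcd, le_refl d⟩)
  have hc'd' : c' ≤ d' := by
    by_contra h
    push_neg at h
    have := hsm hd'S hc'S h
    rw [hc', hd'] at this
    linarith
  -- preimage is Icc c' d'
  have hpre : S ∩ f ⁻¹' Set.Icc c d = Set.Icc c' d' := by
    ext x
    simp only [Set.mem_inter_iff, Set.mem_preimage, Set.mem_Icc]
    constructor
    · rintro ⟨hxS', hcx, hxd⟩
      have hxS'' : x ∈ S := hxS'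
      constructor
      · by_contra h
        push_neg at h
        have := hsm hxS'' hc'S h
        rw [hc'] at this; linarith
      · by_contra h
        push_neg at h
        have := hsm hd'S hxS'' h
        rw [hd'] at this; linarith
    · rintro ⟨h1, h2⟩
      have hxS'' : x ∈ S := ⟨hc'S.1.trans h1, h2.trans hd'S.2⟩
      refine ⟨hxS'', ?_, ?_⟩
      · rw [← hc']; exact hmono hc'S hxS'' h1
      · rw [← hd']; exact hmono hxS'' hd'S h2
  rw [hpre, Real.volume_Icc, ENNReal.toReal_ofReal (by linarith)]
  rcases eq_or_lt_of_le hc'd' with heq | hlt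
  · -- degenerate case
    have hdc : d - c = 0 := by rw [← hc', ← hd', heq]; ring
    have hu0 : d' - c' = 0 := sub_eq_zero.mpr heq.symm
    rw [hdc, hu0]
    simp
  · have hu0 : (0:ℝ) < d' - c' := by linarith
    have hcd' : c < d := by
      rcases eq_or_lt_of_le hcd with h | h
      · exfalso; apply ne_of_lt hlt; apply hsm.injOn hc'S hd'S; rw [hc', hd', h]
      · exact h
    -- MVT on [c', d'] and [a, b]
    obtain ⟨ξ, hξ, hξs⟩ := exists_deriv_eq_slope f hlt
      (hcf.continuousOn) (hdf.differentiableOn)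
    obtain ⟨η, hη, hηs⟩ := exists_deriv_eq_slope f hab
      (hcf.continuousOn) (hdf.differentiableOn)
    rw [hc', hd'] at hξs
    have hξS : ξ ∈ S := ⟨hc'S.1.trans hξ.1.le, hξ.2.le.trans hd'S.2⟩
    have hηS : η ∈ S := ⟨hη.1.le, hη.2.le⟩
    have h1 : d - c = deriv f ξ * (d' - c') := by
      rw [hξs]; field_simp
    have h2 : f b - f a = deriv f η * (b - a) := by
      rw [hηs]; field_simp
    have hξpos : 0 < deriv f ξ := by
      rw [hξs]; exact div_pos (by linarith) hu0
    have hηpos : 0 < deriv f η := by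
      rw [hηs]; exact div_pos hD hL
    -- key bound
    have hA0 : 0 ≤ A := le_trans (abs_nonneg _) (hAx a haS)
    have hkey : |deriv f η - deriv f ξ| ≤ ε * deriv f ξ := by
      have hd1 : |deriv f η - deriv f ξ| ≤ A * |η - ξ| := by
        have := Convex.norm_image_sub_le_of_norm_deriv_le
          (f := deriv f) (s := S) (fun x _ => hdf'.differentiableAt)
          (fun x hx => hAx x hx) (convex_Icc a b) hξS hηS
        simpa [Real.norm_eq_abs] using this
      have hd2 : |η - ξ| ≤ b - a := by
        rw [abs_le]
        constructor
        · linarith [hηS.1, hξS.2]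
        · linarith [hηS.2, hξS.1]
      have step0 : A * |η - ξ| ≤ A * (b - a) := mul_le_mul_of_nonneg_left hd2 hA0
      have hBξ : B ≤ deriv f ξ := by
        have := hBx ξ hξS
        rwa [abs_of_pos hξpos] at this
      have step2 : ε * B ≤ ε * deriv f ξ := mul_le_mul_of_nonneg_left hBξ hε.le
      linarith [hstretch]
    -- finish
    have hrw : (d' - c') / (b - a) - (d - c) / (f b - f a) =
        (deriv f η - deriv f ξ) * (d' - c') / (f b - f a) := by
      rw [h1, h2]
      field_simp
    rw [hrw, abs_div, abs_mul, abs_of_pos hD, abs_of_pos hu0, h1,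
      show ε * (deriv f ξ * (d' - c') / (f b - f a)) =
        ε * deriv f ξ * (d' - c') / (f b - f a) by ring]
    gcongr

/-- criterion for uniform stretching, Lemma 2 of Fayad:
if `f ∈ C²(ℝ)` is monotonic on a compact interval `I = [a,b]`,
`λ(J) ≥ k` where `J = [inf_I f, sup_I f]`, and
`sup_I |f''| ⋅ λ(I) ≤ ε ⋅ inf_I |f'|`, then `f` is `(ε, k)`-uniformly
stretching on `I`. -/
theorem uniform_stretching_criterion (f : ℝ → ℝ) (hf : ContDiff ℝ 2 f)
    (a b : ℝ) (hab : a < b)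
    (hmono : MonotoneOn f (Set.Icc a b) ∨ AntitoneOn f (Set.Icc a b))
    (ε k : ℝ) (hε : 0 < ε) (hk : 0 < k)
    (hJ : k ≤ sSup (f '' Set.Icc a b) - sInf (f '' Set.Icc a b))
    (hstretch : sSup ((fun x => |deriv (deriv f) x|) '' Set.Icc a b) * (b - a) ≤
      ε * sInf ((fun x => |deriv f x|) '' Set.Icc a b)) :
    ∀ c d : ℝ, c ≤ d →
      Set.Icc c d ⊆ Set.Icc (sInf (f '' Set.Icc a b)) (sSup (f '' Set.Icc a b)) →
      |(volume (Set.Icc a b ∩ f ⁻¹' Set.Icc c d)).toReal / (b - a) -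
          (d - c) / (sSup (f '' Set.Icc a b) - sInf (f '' Set.Icc a b))| ≤
        ε * ((d - c) / (sSup (f '' Set.Icc a b) - sInf (f '' Set.Icc a b))) := by
  rcases hmono with hmono | hanti
  · exact aux_mono_stretch f hf a b hab hmono ε k hε hk hJ hstretch
  · have haS : a ∈ Set.Icc a b := Set.left_mem_Icc.mpr hab.le
    have hbS : b ∈ Set.Icc a b := Set.right_mem_Icc.mpr hab.le
    have hm : sInf (f '' Set.Icc a b) = f b :=
      IsLeast.csInf_eq ⟨⟨b, hbS, rfl⟩, by rintro y ⟨x, hx, rfl⟩; exact hanti hx hbS hx.2⟩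
    have hM : sSup (f '' Set.Icc a b) = f a :=
      IsGreatest.csSup_eq ⟨⟨a, haS, rfl⟩, by rintro y ⟨x, hx, rfl⟩; exact hanti haS hx hx.1⟩
    have hgInf : sInf ((fun x => -f x) '' Set.Icc a b) = -f a :=
      IsLeast.csInf_eq ⟨⟨a, haS, rfl⟩, by
        rintro y ⟨x, hx, rfl⟩; simp only [neg_le_neg_iff]; exact hanti haS hx hx.1⟩
    have hgSup : sSup ((fun x => -f x) '' Set.Icc a b) = -f b :=
      IsGreatest.csSup_eq ⟨⟨b, hbS, rfl⟩, by
        rintro y ⟨x, hx, rfl⟩; simp only [neg_le_neg_iff]; exact hanti hx hbS hx.2⟩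
    have ed1 : deriv (fun x => -f x) = fun x => -deriv f x := funext fun x => deriv.neg
    have ed2 : deriv (deriv (fun x => -f x)) = fun x => -deriv (deriv f) x := by
      rw [ed1]; exact funext fun x => deriv.neg
    have im1 : (fun x => |deriv (fun y => -f y) x|) = (fun x => |deriv f x|) := by
      rw [ed1]; funext x; exact abs_neg _
    have im2 : (fun x => |deriv (deriv (fun y => -f y)) x|) =
        (fun x => |deriv (deriv f) x|) := by
      rw [ed2]; funext x; exact abs_neg _
    have key := aux_mono_stretch (fun x => -f x) hf.neg a b hab hanti.neg ε k hε hk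
      (by rw [hgSup, hgInf]; rw [hm, hM] at hJ; linarith)
      (by rw [im1, im2]; exact hstretch)
    intro c d hcd hsub
    rw [hm, hM] at hsub ⊢
    have hsub' : Set.Icc (-d) (-c) ⊆
        Set.Icc (sInf ((fun x => -f x) '' Set.Icc a b))
          (sSup ((fun x => -f x) '' Set.Icc a b)) := by
      rw [hgInf, hgSup]
      intro x hx
      have : -x ∈ Set.Icc c d := ⟨by linarith [hx.2], by linarith [hx.1]⟩
      have := hsub this
      exact ⟨by linarith [this.2], by linarith [this.1]⟩
    have hg2 := key (-d) (-c) (by linarith) hsub'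
    have hpre : (fun x => -f x) ⁻¹' Set.Icc (-d) (-c) = f ⁻¹' Set.Icc c d := by
      ext x
      simp only [Set.mem_preimage, Set.mem_Icc]
      constructor
      · rintro ⟨h1, h2⟩; exact ⟨by linarith, by linarith⟩
      · rintro ⟨h1, h2⟩; exact ⟨by linarith, by linarith⟩
    rw [hgSup, hgInf, hpre] at hg2
    have e1 : (-c) - (-d) = d - c := by ring
    have e2 : -f b - -f a = f a - f b := by ring
    rw [e1, e2] at hg2
    exact hg2
end

section
/- Fix q ∈ ℕ, q ≥ 16, c ∈ [0,1), A > 0, and rational α'' with a specified iterate m̃ such that the quantity s := q m̃ α'' satisfies |s − 1/2 − k| ≤ 1/q̃ for some integer k (q̃ the denominator of α''). Then the m̃-th iterate of Φ = g_{q,A}^{-1} ∘ φ_{α''} ∘ g_{q,A}, restricted (in the first two Hopf angle coordinates) to a connected subset I of the line N_{q,c} × {ξ} = {θ₂ = −(1−q⁻¹)θ₁ + c} × {ξ}, has the form Φ^{m̃}|_I(θ₁,θ₂) = (f₁(θ₁) mod 1, f₂(θ₁) mod 1), where f₁(θ₁) = θ₁ + m̃α'' + 2A r₁^{q(q+1)}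 r₂^{q²}(cos(2πq²(2θ₁ − c)) − σ(θ₁)/2) and f₂(θ₁) = (q⁻¹ − 1)θ₁ + c + m̃α'' + 2(1+q⁻¹) A r₁^{q(q+1)} r₂^{q²}(cos(2πq²(2θ₁−c)) − σ(θ₁)/2), with σ(θ₁) = cos(2π(q²(2θ₁−c) + q m̃ α'')) + cos(2π q²(2θ₁−c)), r₁ = sin ξ, r₂ = cos ξ. -/
open Real

/-- The rotation `φ_α` in Hopf coordinates, lifted to `ℝ³`. -/
noncomputable def phiHopf (α : ℝ) : ℝ × ℝ × ℝ → ℝ × ℝ × ℝ := fun p =>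
  (p.1 + α, p.2.1 + α, p.2.2)

/-- The conjugated map `Φ = g_{q,A}⁻¹ ∘ φ_α ∘ g_{q,A}` (`g_{q,A}⁻¹ = g_{q,-A}`). -/
noncomputable def PhiHopf (q : ℕ) (A α : ℝ) : ℝ × ℝ × ℝ → ℝ × ℝ × ℝ := fun p =>
  gHopf q (-A) (phiHopf α (gHopf q A p))

lemma PhiHopf_apply (q : ℕ) (A α θ₁ θ₂ ξ : ℝ) :
    PhiHopf q A α (θ₁, θ₂, ξ) =
      (θ₁ + α + A * Real.sin ξ ^ (q * (q + 1)) * Real.cos ξ ^ (q ^ 2) *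
          (Real.cos (2 * π * (q : ℝ) ^ 2 * (θ₁ * (1 + (q : ℝ)⁻¹) - θ₂)) -
           Real.cos (2 * π * (q : ℝ) ^ 2 * (θ₁ * (1 + (q : ℝ)⁻¹) - θ₂ + α * (q : ℝ)⁻¹))),
       θ₂ + α + (1 + (q : ℝ)⁻¹) * (A * Real.sin ξ ^ (q * (q + 1)) * Real.cos ξ ^ (q ^ 2) *
          (Real.cos (2 * π * (q : ℝ) ^ 2 * (θ₁ * (1 + (q : ℝ)⁻¹) - θ₂)) -
           Real.cos (2 * π * (q : ℝ) ^ 2 * (θ₁ * (1 + (q : ℝ)⁻¹) - θ₂ + α * (q : ℝ)⁻¹)))),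
       ξ) := by
  simp only [PhiHopf, gHopf, phiHopf]
  have key : 2 * π * (q : ℝ) ^ 2 *
      ((θ₁ + A * Real.sin ξ ^ (q * (q + 1)) * Real.cos ξ ^ (q ^ 2) *
          Real.cos (2 * π * (q : ℝ) ^ 2 * (θ₁ * (1 + (q : ℝ)⁻¹) - θ₂)) + α) * (1 + (q : ℝ)⁻¹) -
       (θ₂ + (1 + (q : ℝ)⁻¹) * A * Real.sin ξ ^ (q * (q + 1)) * Real.cos ξ ^ (q ^ 2) *
          Real.cos (2 * π * (q : ℝ) ^ 2 * (θ₁ * (1 + (q : ℝ)⁻¹) - θ₂)) + α)) =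
      2 * π * (q : ℝ) ^ 2 * (θ₁ * (1 + (q : ℝ)⁻¹) - θ₂ + α * (q : ℝ)⁻¹) := by ring
  rw [key]
  simp only [Prod.mk.injEq]
  refine ⟨by ring, by ring, trivial⟩

lemma PhiHopf_iter (q : ℕ) (hq : (q : ℝ) ≠ 0) (A α : ℝ) (m : ℕ) :
    ∀ θ₁ θ₂ ξ : ℝ, (PhiHopf q A α)^[m] (θ₁, θ₂, ξ) =
      (θ₁ + m * α + A * Real.sin ξ ^ (q * (q + 1)) * Real.cos ξ ^ (q ^ 2) *
          (Real.cos (2 * π * (q : ℝ) ^ 2 * (θ₁ * (1 + (q : ℝ)⁻¹) - θ₂)) -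
           Real.cos (2 * π * (q : ℝ) ^ 2 * (θ₁ * (1 + (q : ℝ)⁻¹) - θ₂) + 2 * π * (q : ℝ) * m * α)),
       θ₂ + m * α + (1 + (q : ℝ)⁻¹) * (A * Real.sin ξ ^ (q * (q + 1)) * Real.cos ξ ^ (q ^ 2) *
          (Real.cos (2 * π * (q : ℝ) ^ 2 * (θ₁ * (1 + (q : ℝ)⁻¹) - θ₂)) -
           Real.cos (2 * π * (q : ℝ) ^ 2 * (θ₁ * (1 + (q : ℝ)⁻¹) - θ₂) + 2 * π * (q : ℝ) * m * α))),
       ξ) := by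
  induction m with
  | zero => intro θ₁ θ₂ ξ; simp
  | succ m ih =>
    intro θ₁ θ₂ ξ
    rw [Function.iterate_succ_apply, PhiHopf_apply, ih]
    set E := A * Real.sin ξ ^ (q * (q + 1)) * Real.cos ξ ^ (q ^ 2) with hE
    have h1 : 2 * π * (q : ℝ) ^ 2 *
        ((θ₁ + α + E * (Real.cos (2 * π * (q : ℝ) ^ 2 * (θ₁ * (1 + (q : ℝ)⁻¹) - θ₂)) -
            Real.cos (2 * π * (q : ℝ) ^ 2 * (θ₁ * (1 + (q : ℝ)⁻¹) - θ₂ + α * (q : ℝ)⁻¹)))) * (1 + (q : ℝ)⁻¹) -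
         (θ₂ + α + (1 + (q : ℝ)⁻¹) * (E * (Real.cos (2 * π * (q : ℝ) ^ 2 * (θ₁ * (1 + (q : ℝ)⁻¹) - θ₂)) -
            Real.cos (2 * π * (q : ℝ) ^ 2 * (θ₁ * (1 + (q : ℝ)⁻¹) - θ₂ + α * (q : ℝ)⁻¹)))))) =
        2 * π * (q : ℝ) ^ 2 * (θ₁ * (1 + (q : ℝ)⁻¹) - θ₂ + α * (q : ℝ)⁻¹) := by ring
    rw [h1]
    have h2 : 2 * π * (q : ℝ) ^ 2 * (θ₁ * (1 + (q : ℝ)⁻¹) - θ₂ + α * (q : ℝ)⁻¹) =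
        2 * π * (q : ℝ) ^ 2 * (θ₁ * (1 + (q : ℝ)⁻¹) - θ₂) + 2 * π * (q : ℝ) * α := by
      field_simp
    rw [h2]
    push_cast
    have h4 : 2 * π * (q : ℝ) ^ 2 * (θ₁ * (1 + (q : ℝ)⁻¹) - θ₂) + 2 * π * (q : ℝ) * α +
        2 * π * (q : ℝ) * (m : ℝ) * α =
        2 * π * (q : ℝ) ^ 2 * (θ₁ * (1 + (q : ℝ)⁻¹) - θ₂) + 2 * π * (q : ℝ) * ((m : ℝ) + 1) * α := by
      ring
    rw [h4]
    simp only [Prod.mk.injEq]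
    refine ⟨by ring, by ring, trivial⟩

/-- the explicit form of `Φ^{m̃}` on the line
`N_{q,c} × {ξ} = {θ₂ = -(1-q⁻¹)θ₁ + c} × {ξ}`:
`Φ^{m̃}(θ₁, θ₂, ξ) = (f₁(θ₁), f₂(θ₁), ξ)` with
`f₁(θ₁) = θ₁ + m̃α'' + 2A r₁^{q(q+1)} r₂^{q²}(cos(2πq²(2θ₁-c)) - σ(θ₁)/2)`,
`f₂(θ₁) = (q⁻¹-1)θ₁ + c + m̃α'' + 2(1+q⁻¹)A r₁^{q(q+1)} r₂^{q²}(cos(2πq²(2θ₁-c)) - σ(θ₁)/2)`,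
`σ(θ₁) = cos(2π(q²(2θ₁-c) + q m̃ α'')) + cos(2π q²(2θ₁-c))`. -/
theorem PhiHopf_iterate_on_line (q : ℕ) (hq : 16 ≤ q) (c : ℝ)
    (hc : c ∈ Set.Ico (0 : ℝ) 1) (A : ℝ) (hA : 0 < A)
    (p'' : ℤ) (qt : ℕ) (hqt : 0 < qt) (α'' : ℝ) (hα : α'' = (p'' : ℝ) / qt)
    (mt : ℕ)
    (hmt : ∃ kk : ℤ, |(q : ℝ) * mt * α'' - 1 / 2 - kk| ≤ 1 / qt)
    (θ₁ ξ : ℝ) :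
    (PhiHopf q A α'')^[mt] (θ₁, ((q : ℝ)⁻¹ - 1) * θ₁ + c, ξ) =
      (θ₁ + mt * α'' + 2 * A * (Real.sin ξ) ^ (q * (q + 1)) * (Real.cos ξ) ^ (q ^ 2) *
          (Real.cos (2 * π * (q : ℝ) ^ 2 * (2 * θ₁ - c)) -
            (Real.cos (2 * π * ((q : ℝ) ^ 2 * (2 * θ₁ - c) + (q : ℝ) * mt * α'')) +
              Real.cos (2 * π * (q : ℝ) ^ 2 * (2 * θ₁ - c))) / 2),
       ((q : ℝ)⁻¹ - 1) * θ₁ + c + mt * α'' +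
          2 * (1 + (q : ℝ)⁻¹) * A * (Real.sin ξ) ^ (q * (q + 1)) * (Real.cos ξ) ^ (q ^ 2) *
          (Real.cos (2 * π * (q : ℝ) ^ 2 * (2 * θ₁ - c)) -
            (Real.cos (2 * π * ((q : ℝ) ^ 2 * (2 * θ₁ - c) + (q : ℝ) * mt * α'')) +
              Real.cos (2 * π * (q : ℝ) ^ 2 * (2 * θ₁ - c))) / 2),
       ξ) := by
  have hq0 : (q : ℝ) ≠ 0 := Nat.cast_ne_zero.mpr (by omega)
  rw [PhiHopf_iter q hq0 A α'' mt θ₁ _ ξ]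
  have e1 : 2 * π * (q : ℝ) ^ 2 * (θ₁ * (1 + (q : ℝ)⁻¹) - (((q : ℝ)⁻¹ - 1) * θ₁ + c)) =
      2 * π * (q : ℝ) ^ 2 * (2 * θ₁ - c) := by ring
  rw [e1]
  have e2 : 2 * π * (q : ℝ) ^ 2 * (2 * θ₁ - c) + 2 * π * (q : ℝ) * (mt : ℝ) * α'' =
      2 * π * ((q : ℝ) ^ 2 * (2 * θ₁ - c) + (q : ℝ) * (mt : ℝ) * α'') := by ring
  rw [e2]
  simp only [Prod.mk.injEq]
  refine ⟨by ring, by ring, trivial⟩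
end
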